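/- arXiv:2306.04929 — 3 statements merged into one kernel-verified Lean document; each statement's English description precedes it below -/
import Mathlib

section
/- Let A, B, C : ℝ → ℝ be twice continuously differentiable, let tₙ ∈ ℝ, let q : ℝ → ℝ satisfy q′(t) = A(q(t)) + B(q(t)) + C(q(t)) for all t. Let q_A : ℝ → ℝ satisfy q_A′(s) = A(q_A(s)) with q_A(0) = q(tₙ), and let q_B : ℝ → ℝ → ℝ be the two-parameter flow of B (for every φ, ∂_s q_B(s, φ) = B(q_B(s, φ)) and q_B(0, φ) = φ), with sufficient smoothness near the relevant points. Then the original (fully sequential) scheme's local truncation error attributable to process B, lte_B^{Ori}(Δt) = ∫₀^{Δt} B(q_B(η, q_A(Δt))) dη − ∫₀^{Δt} B(q(tₙ+η)) dη, satisfies lte_B^{Ori}(Δt) = (Δt²/2)·B′(q(tₙ))·(A(q(tₙ)) − C(q(tₙ))) + O(Δt³) as Δt → 0. -/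
open Filter Asymptotics

/-!
Write the error as `∫₀^Δt g(η, Δt) dη` with `g(η, k) = B(q_B(η, q_A(k))) − B(q(tₙ + η))`, which is
`C²` near the origin and vanishes there. Replacing `g` by its linearisation `ℓ` at the origin costs
`O(‖(η, Δt)‖²) = O(Δt²)` on the range of integration, hence `O(Δt³)` after integrating, while
`∫₀^Δt ℓ(η, Δt) dη = (Δt²/2) ∂₁g(0) + Δt² ∂₂g(0)`. Differentiating along the axes gives
`∂₁g(0) = B′·(B − (A + B + C)) = −B′·(A + C)` and `∂₂g(0) = B′·A` at `q(tₙ)`, so the sum is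
`(Δt²/2)·B′·(A − C)`.
-/

open Metric Set Topology Interval MeasureTheory

variable {E F : Type*} [NormedAddCommGroup E] [NormedSpace ℝ E]
  [NormedAddCommGroup F] [NormedSpace ℝ F]

theorem ContDiffAt.isBigO_sub_sub_fderiv {f : E → F} {x : E} (hf : ContDiffAt ℝ 2 f x) :
    (fun y => f y - f x - fderiv ℝ f x (y - x)) =O[𝓝 x] (fun y => ‖y - x‖ ^ 2) := by
  obtain ⟨K, hK, hKf'⟩ :=
    ((hf.fderiv_right (m := 1) le_rfl).differentiableAt one_ne_zero).isBigO_sub.exists_nonneg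
  have hdiff : ∀ᶠ y in 𝓝 x, DifferentiableAt ℝ f y :=
    (hf.eventually (by simp)).mono fun y hy => hy.differentiableAt (by simp)
  obtain ⟨r, hr, hball⟩ := eventually_nhds_iff_ball.mp (hKf'.bound.and hdiff)
  refine .of_bound K ?_
  filter_upwards [ball_mem_nhds x hr] with y hy
  have hsub : closedBall x ‖y - x‖ ⊆ ball x r := closedBall_subset_ball (mem_ball_iff_norm.1 hy)
  have hderiv : ∀ z ∈ closedBall x ‖y - x‖, ‖fderiv ℝ f z - fderiv ℝ f x‖ ≤ K * ‖y - x‖ :=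
    fun z hz => (hball z (hsub hz)).1.trans
      (mul_le_mul_of_nonneg_left (mem_closedBall_iff_norm.1 hz) hK)
  have := (convex_closedBall x ‖y - x‖).norm_image_sub_le_of_norm_fderiv_le'
    (fun z hz => (hball z (hsub hz)).2) hderiv (mem_closedBall_self (norm_nonneg _))
    (mem_closedBall_iff_norm.2 le_rfl)
  simpa [dist_eq_norm, sq, mul_assoc] using this

theorem isBigO_intervalIntegral_of_isBigO_norm_sq {φ : ℝ × ℝ → E}
    (hφ : φ =O[𝓝 0] (fun p => ‖p‖ ^ 2)) :
    (fun t => ∫ η in (0:ℝ)..t, φ (η, t)) =O[𝓝 0] (fun t => t ^ 3) := by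
  obtain ⟨c, hc, hcφ⟩ := hφ.exists_nonneg
  obtain ⟨r, hr, hball⟩ := eventually_nhds_iff_ball.mp hcφ.bound
  refine .of_bound c ?_
  filter_upwards [ball_mem_nhds (0:ℝ) hr] with t ht
  have hnorm : ∀ η ∈ Ι 0 t, ‖(η, t)‖ = |t| := fun η hη => by
    have := abs_sub_left_of_mem_uIcc (uIoc_subset_uIcc hη)
    simp only [sub_zero] at this
    simp [Prod.norm_def, this]
  calc ‖∫ η in (0:ℝ)..t, φ (η, t)‖ ≤ c * t ^ 2 * |t - 0| :=
        intervalIntegral.norm_integral_le_of_norm_le_const fun η hη => by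
          have := hball (η, t) (by rw [mem_ball_zero_iff, hnorm η hη]; simpa using ht)
          simpa [hnorm η hη] using this
    _ = c * ‖t ^ 3‖ := by rw [sub_zero, norm_pow, Real.norm_eq_abs, ← sq_abs]; ring

theorem ContinuousLinearMap.intervalIntegral_apply_prodMk [CompleteSpace E] (ℓ : ℝ × ℝ →L[ℝ] E)
    (t : ℝ) :
    ∫ η in (0:ℝ)..t, ℓ (η, t) = (t ^ 2 / 2) • ℓ (1, 0) + t ^ 2 • ℓ (0, 1) := by
  have hℓ : ∀ η, ℓ (η, t) = η • ℓ (1, 0) + t • ℓ (0, 1) := fun η => by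
    rw [← map_smul, ← map_smul, ← map_add]; simp
  simp only [hℓ]
  rw [intervalIntegral.integral_add, intervalIntegral.integral_smul_const, integral_id,
    intervalIntegral.integral_const]
  · simp [sq, smul_smul]
  all_goals exact Continuous.intervalIntegrable (by fun_prop) _ _

theorem ContDiffAt.isBigO_intervalIntegral_sub_taylor [CompleteSpace E] {g : ℝ × ℝ → E}
    (hg : ContDiffAt ℝ 2 g 0) (hg0 : g 0 = 0)
    (hint : ∀ t, IntervalIntegrable (fun η => g (η, t)) volume 0 t) :
    (fun t => (∫ η in (0:ℝ)..t, g (η, t))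
        - ((t ^ 2 / 2) • fderiv ℝ g 0 (1, 0) + t ^ 2 • fderiv ℝ g 0 (0, 1)))
      =O[𝓝 0] (fun t => t ^ 3) := by
  set ℓ := fderiv ℝ g 0
  have hremainder : ∀ t, (∫ η in (0:ℝ)..t, g (η, t))
      - ((t ^ 2 / 2) • ℓ (1, 0) + t ^ 2 • ℓ (0, 1))
        = ∫ η in (0:ℝ)..t, (g (η, t) - g 0 - ℓ (η, t)) := fun t => by
    rw [← ℓ.intervalIntegral_apply_prodMk, ← intervalIntegral.integral_sub (hint t)
      (Continuous.intervalIntegrable (by fun_prop) _ _)]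
    simp [hg0]
  simp only [hremainder]
  exact isBigO_intervalIntegral_of_isBigO_norm_sq (φ := fun p => g p - g 0 - ℓ p)
    (by simpa using hg.isBigO_sub_sub_fderiv)

theorem fderiv_apply_one_zero_eq {g : ℝ × ℝ → E} {x y : ℝ} {a : E}
    (hg : DifferentiableAt ℝ g (x, y)) (ha : HasDerivAt (fun s => g (s, y)) a x) :
    fderiv ℝ g (x, y) (1, 0) = a :=
  (hg.hasFDerivAt.comp_hasDerivAt x ((hasDerivAt_id x).prodMk (hasDerivAt_const x y))).unique ha

theorem fderiv_apply_zero_one_eq {g : ℝ × ℝ → E} {x y : ℝ} {a : E}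
    (hg : DifferentiableAt ℝ g (x, y)) (ha : HasDerivAt (fun s => g (x, s)) a y) :
    fderiv ℝ g (x, y) (0, 1) = a :=
  (hg.hasFDerivAt.comp_hasDerivAt y ((hasDerivAt_const y x).prodMk (hasDerivAt_id y))).unique ha

theorem contDiff_succ_of_hasDerivAt {F : E → E} {q : ℝ → E} {n : ℕ} (hF : ContDiff ℝ n F)
    (hq : ∀ t, HasDerivAt q (F (q t)) t) : ContDiff ℝ (n + 1) q := by
  have hdiff : Differentiable ℝ q := fun t => (hq t).differentiableAt
  have hderiv : deriv q = F ∘ q := funext fun t => (hq t).deriv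
  induction n with
  | zero =>
    exact contDiff_succ_iff_deriv.2
      ⟨hdiff, by simp, hderiv ▸ contDiff_zero.2 (hF.continuous.comp hdiff.continuous)⟩
  | succ n ih =>
    exact contDiff_succ_iff_deriv.2 ⟨hdiff, by simp, hderiv ▸ hF.comp (ih hF.of_succ)⟩

section LocalTruncationError

variable {B q qA : ℝ → ℝ} {qB : ℝ → ℝ → ℝ} {tn : ℝ}

def lteBIntegrand (B q qA : ℝ → ℝ) (qB : ℝ → ℝ → ℝ) (tn : ℝ) (p : ℝ × ℝ) : ℝ :=
  B (qB p.1 (qA p.2)) - B (q (tn + p.1))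

theorem lteBIntegrand_zero (hqA0 : qA 0 = q tn) (hqB0 : ∀ φ, qB 0 φ = φ) :
    lteBIntegrand B q qA qB tn 0 = 0 := by
  simp [lteBIntegrand, hqA0, hqB0]

theorem contDiffAt_lteBIntegrand (hB : ContDiff ℝ 2 B) (hq : ContDiff ℝ 2 q)
    (hqA0 : qA 0 = q tn) (hqA : ContDiffAt ℝ 2 qA 0)
    (hqB : ContDiffAt ℝ 2 (fun p : ℝ × ℝ => qB p.1 p.2) (0, q tn)) :
    ContDiffAt ℝ 2 (lteBIntegrand B q qA qB tn) 0 := by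
  rw [← hqA0] at hqB
  have hflow : ContDiffAt ℝ 2 (fun p : ℝ × ℝ => qB p.1 (qA p.2)) 0 :=
    hqB.comp (0 : ℝ × ℝ) (contDiffAt_fst.prodMk (hqA.comp (0 : ℝ × ℝ) contDiffAt_snd))
  exact (hB.contDiffAt.comp _ hflow).sub
    (hB.comp (hq.comp (contDiff_const.add contDiff_fst))).contDiffAt

theorem hasDerivAt_lteBIntegrand_fst {v : ℝ} (hB : Differentiable ℝ B)
    (hq : HasDerivAt q v tn) (hqA0 : qA 0 = q tn) (hqB0 : ∀ φ, qB 0 φ = φ)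
    (hqB : HasDerivAt (fun u => qB u (q tn)) (B (q tn)) 0) :
    HasDerivAt (fun s => lteBIntegrand B q qA qB tn (s, 0))
      (deriv B (q tn) * B (q tn) - deriv B (q tn) * v) 0 := by
  have hflow := (hB (qB 0 (q tn))).hasDerivAt.comp 0 hqB
  have hshift : HasDerivAt (fun s => q (tn + s)) v 0 :=
    HasDerivAt.comp_const_add tn 0 (by rwa [add_zero])
  have hexact := (hB (q (tn + 0))).hasDerivAt.comp 0 hshift
  simpa [lteBIntegrand, hqB0, hqA0, Function.comp_def] using hflow.fun_sub hexact

theorem hasDerivAt_lteBIntegrand_snd {a : ℝ} (hB : Differentiable ℝ B)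
    (hqA : HasDerivAt qA a 0) (hqA0 : qA 0 = q tn) (hqB0 : ∀ φ, qB 0 φ = φ) :
    HasDerivAt (fun k => lteBIntegrand B q qA qB tn (0, k)) (deriv B (q tn) * a) 0 := by
  have := ((hB (qA 0)).hasDerivAt.comp 0 hqA).sub_const (B (q (tn + 0)))
  simpa [lteBIntegrand, hqB0, hqA0, Function.comp_def] using this

end LocalTruncationError

theorem lte_B_original_three_process
    (A B C q qA : ℝ → ℝ) (qB : ℝ → ℝ → ℝ) (tn : ℝ)
    (hA : ContDiff ℝ 2 A) (hB : ContDiff ℝ 2 B) (hC : ContDiff ℝ 2 C)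
    (hq : ∀ t, HasDerivAt q (A (q t) + B (q t) + C (q t)) t)
    (hqA : ∀ s, HasDerivAt qA (A (qA s)) s)
    (hqA0 : qA 0 = q tn)
    (hqB : ∀ φ s, HasDerivAt (fun u => qB u φ) (B (qB s φ)) s)
    (hqB0 : ∀ φ, qB 0 φ = φ)
    (hqAsmooth : ContDiffAt ℝ 2 qA 0)
    (hqBsmooth : ContDiffAt ℝ 2 (fun p : ℝ × ℝ => qB p.1 p.2) (0, q tn)) :
    (fun Δt : ℝ =>
        ((∫ η in (0:ℝ)..Δt, B (qB η (qA Δt))) - ∫ η in (0:ℝ)..Δt, B (q (tn + η)))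
          - Δt ^ 2 / 2 * (deriv B (q tn) * (A (q tn) - C (q tn))))
      =O[nhds (0:ℝ)] (fun Δt : ℝ => Δt ^ 3) := by
  have hqsmooth : ContDiff ℝ 2 q :=
    contDiff_succ_of_hasDerivAt (n := 1) (((hA.add hB).add hC).of_le one_le_two) hq
  have hg := contDiffAt_lteBIntegrand hB hqsmooth hqA0 hqAsmooth hqBsmooth
  have hgdiff : DifferentiableAt ℝ (lteBIntegrand B q qA qB tn) (0, 0) :=
    hg.differentiableAt two_ne_zero
  have hB1 : Differentiable ℝ B := hB.differentiable two_ne_zero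
  have hfst := fderiv_apply_one_zero_eq hgdiff <|
    hasDerivAt_lteBIntegrand_fst hB1 (hq tn) hqA0 hqB0 (by simpa [hqB0] using hqB (q tn) 0)
  have hsnd := fderiv_apply_zero_one_eq hgdiff <|
    hasDerivAt_lteBIntegrand_snd hB1 (hqA 0) hqA0 hqB0
  have hexact : Continuous fun η => B (q (tn + η)) := by
    have := hqsmooth.continuous; fun_prop
  have hsequential : ∀ Δt, Continuous fun η => B (qB η (qA Δt)) := fun Δt =>
    hB.continuous.comp (continuous_iff_continuousAt.2 fun s => (hqB (qA Δt) s).continuousAt)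
  refine (hg.isBigO_intervalIntegral_sub_taylor (lteBIntegrand_zero hqA0 hqB0) fun Δt =>
    ((hsequential Δt).sub hexact).intervalIntegrable 0 Δt).congr_left fun Δt => ?_
  rw [Prod.zero_eq_mk, hfst, hsnd, hqA0, ← intervalIntegral.integral_sub
    ((hsequential Δt).intervalIntegrable 0 Δt) (hexact.intervalIntegrable 0 Δt)]
  simp only [lteBIntegrand, smul_eq_mul]
  ring
end

section
/- Let A, B, C : ℝ → ℝ be twice continuously differentiable, let tₙ ∈ ℝ, let q : ℝ → ℝ satisfy q′(t) = A(q(t)) + B(q(t)) + C(q(t)) for all t. Let q_A : ℝ → ℝ satisfy q_A′(s) = A(q_A(s)) with q_A(0) = q(tₙ), and let q_B and q_C : ℝ → ℝ → ℝ be the two-parameter flows of B and C respectively, with sufficient smoothness near the relevant points. Define the original (fully sequential) update F^{Ori}(Δt) = q_C(Δt, q_B(Δt, q_A(Δt))). Then F^{Ori}(Δt) − q(tₙ + Δt) = (Δt²/2)·[A′(q(tₙ))·(−B(q(tₙ)) − C(q(tₙ))) + B′(q(tₙ))·(A(q(tₙ)) − C(q(tₙ))) + C′(q(tₙ))·(A(q(tₙ))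 + B(q(tₙ)))] + O(Δt³) as Δt → 0. -/
/-!
A solution of an autonomous equation `y' = D y` with `D ∈ C²` has third derivative
`D'' D² + D'² D` evaluated along the solution, so as long as it stays in a compact set,
`y s = y 0 + s D (y 0) + s² / 2 D' (y 0) D (y 0) + O(s³)` with a constant independent of the
initial value. Feeding an expansion `k s = a + s b + s² / 2 c + O(s³)` of the initial value into
such a flow therefore yields an expansion of the same kind. Running this through the flows of
`A`, `B`, `C` in turn and subtracting the expansion of the exact solution of `y' = A + B + C`,
the terms of order `0` and `1` cancel and the second-order coefficients differ by the stated
combination of `A'`, `B'`, `C'`.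
-/

open Filter Asymptotics Set Topology

theorem abs_sub_le_of_abs_deriv_le_pow {u u' : ℝ → ℝ} {x₀ x c : ℝ} {n : ℕ}
    (hu : ∀ t ∈ uIcc x₀ x, HasDerivAt u (u' t) t)
    (hbound : ∀ t ∈ uIcc x₀ x, |u' t| ≤ c * |t - x₀| ^ n) :
    |u x - u x₀| ≤ c * |x - x₀| ^ (n + 1) := by
  rcases eq_or_ne x x₀ with rfl | hx
  · simp
  have hc : 0 ≤ c := by
    have hpos : 0 < |x - x₀| ^ n := pow_pos (abs_pos.2 (sub_ne_zero.2 hx)) n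
    exact nonneg_of_mul_nonneg_left ((abs_nonneg _).trans (hbound x right_mem_uIcc)) hpos
  have hbound' : ∀ t ∈ uIcc x₀ x, ‖u' t‖ ≤ c * |x - x₀| ^ n := fun t ht =>
    (hbound t ht).trans <| mul_le_mul_of_nonneg_left
      (pow_le_pow_left₀ (abs_nonneg _) (abs_sub_left_of_mem_uIcc ht) n) hc
  have := (convex_uIcc x₀ x).norm_image_sub_le_of_norm_hasDerivWithin_le
    (fun t ht => (hu t ht).hasDerivWithinAt) hbound' left_mem_uIcc right_mem_uIcc
  rw [pow_succ, ← mul_assoc]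
  simpa [Real.norm_eq_abs] using this

theorem isBigO_sub_pow_succ_of_hasDerivAt {u u' : ℝ → ℝ} {x₀ : ℝ} {n : ℕ}
    (hu : ∀ᶠ t in 𝓝 x₀, HasDerivAt u (u' t) t)
    (hu' : u' =O[𝓝 x₀] fun t => (t - x₀) ^ n) :
    (fun t => u t - u x₀) =O[𝓝 x₀] fun t => (t - x₀) ^ (n + 1) := by
  obtain ⟨c, hc⟩ := hu'.bound
  obtain ⟨δ, hδ, hball⟩ := Metric.eventually_nhds_iff_ball.1 (hu.and hc)
  refine IsBigO.of_bound c ?_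
  filter_upwards [Metric.ball_mem_nhds x₀ hδ] with x hx
  have hsub : uIcc x₀ x ⊆ Metric.ball x₀ δ := fun t ht =>
    (abs_sub_left_of_mem_uIcc ht).trans_lt hx
  simpa [Real.norm_eq_abs, abs_pow] using abs_sub_le_of_abs_deriv_le_pow
    (fun t ht => (hball t (hsub ht)).1)
    (fun t ht => by simpa [Real.norm_eq_abs, abs_pow] using (hball t (hsub ht)).2)

theorem isBigO_sub_sub_mul_sq_of_hasDerivAt {f f' : ℝ → ℝ} {a : ℝ}
    (hf : ∀ᶠ y in 𝓝 a, HasDerivAt f (f' y) y) (hf' : DifferentiableAt ℝ f' a) :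
    (fun y => f y - f a - f' a * (y - a)) =O[𝓝 a] fun y => (y - a) ^ 2 := by
  have hlin : ∀ᶠ y in 𝓝 a, HasDerivAt (fun y => f y - f' a * (y - a)) (f' y - f' a) y := by
    filter_upwards [hf] with y hy
    exact (hy.sub (((hasDerivAt_id' y).sub_const a).const_mul (f' a))).congr_deriv (by ring)
  simpa [sub_right_comm] using isBigO_sub_pow_succ_of_hasDerivAt (n := 1) hlin
    (by simpa using hf'.hasDerivAt.isBigO_sub)

theorem abs_sub_taylor_two_le {u u₁ u₂ u₃ : ℝ → ℝ} {s M : ℝ}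
    (h₁ : ∀ t ∈ uIcc 0 s, HasDerivAt u (u₁ t) t)
    (h₂ : ∀ t ∈ uIcc 0 s, HasDerivAt u₁ (u₂ t) t)
    (h₃ : ∀ t ∈ uIcc 0 s, HasDerivAt u₂ (u₃ t) t)
    (hM : ∀ t ∈ uIcc 0 s, |u₃ t| ≤ M) :
    |u s - u 0 - s * u₁ 0 - s ^ 2 / 2 * u₂ 0| ≤ M * |s| ^ 3 := by
  have hsub : ∀ t ∈ uIcc 0 s, uIcc 0 t ⊆ uIcc 0 s := fun t ht => uIcc_subset_uIcc_left ht
  have hR₂ : ∀ t ∈ uIcc 0 s, |u₂ t - u₂ 0| ≤ M * |t| ^ 1 := fun t ht => by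
    simpa using abs_sub_le_of_abs_deriv_le_pow (n := 0)
      (fun τ hτ => h₃ τ (hsub t ht hτ)) (fun τ hτ => by simpa using hM τ (hsub t ht hτ))
  have hR₁ : ∀ t ∈ uIcc 0 s, |u₁ t - u₁ 0 - t * u₂ 0| ≤ M * |t| ^ 2 := fun t ht => by
    simpa [sub_right_comm] using abs_sub_le_of_abs_deriv_le_pow (n := 1)
      (u := fun τ => u₁ τ - τ * u₂ 0)
      (fun τ hτ => (h₂ τ (hsub t ht hτ)).sub ((hasDerivAt_id' τ).mul_const (u₂ 0)))
      (fun τ hτ => by simpa using hR₂ τ (hsub t ht hτ))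
  have hR₀ := abs_sub_le_of_abs_deriv_le_pow (n := 2)
    (u := fun τ => u τ - τ * u₁ 0 - τ ^ 2 / 2 * u₂ 0)
    (fun τ hτ => ((h₁ τ hτ).sub ((hasDerivAt_id' τ).mul_const (u₁ 0))).sub
      (((hasDerivAt_pow 2 τ).div_const 2).mul_const (u₂ 0)))
    (fun τ hτ => by
      convert hR₁ τ hτ using 2
      · ring
      · simp)
  convert hR₀ using 2
  · ring
  · simp

def HasQuadraticExpansion (k : ℝ → ℝ) (a b c : ℝ) : Prop :=
  (fun s => k s - a - s * b - s ^ 2 / 2 * c) =O[𝓝 0] fun s => s ^ 3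

namespace HasQuadraticExpansion

variable {k k₁ k₂ : ℝ → ℝ} {a b c a₁ b₁ c₁ a₂ b₂ c₂ : ℝ}

theorem sub (h₁ : HasQuadraticExpansion k₁ a₁ b₁ c₁)
    (h₂ : HasQuadraticExpansion k₂ a₂ b₂ c₂) :
    HasQuadraticExpansion (fun s => k₁ s - k₂ s) (a₁ - a₂) (b₁ - b₂) (c₁ - c₂) :=
  (IsBigO.sub h₁ h₂).congr_left fun s => by ring

theorem isBigO_sub_linear (hk : HasQuadraticExpansion k a b c) :
    (fun s => k s - a - s * b) =O[𝓝 0] fun s => s ^ 2 := by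
  have hcube : (fun s : ℝ => s ^ 3) =O[𝓝 0] fun s => s ^ 2 :=
    (isLittleO_pow_pow (by norm_num)).isBigO
  exact ((hk.trans hcube).add ((isBigO_refl _ _).const_mul_left (c / 2))).congr_left
    fun s => by ring

theorem isBigO_sub_const (hk : HasQuadraticExpansion k a b c) :
    (fun s => k s - a) =O[𝓝 0] fun s => s := by
  have hsq : (fun s : ℝ => s ^ 2) =O[𝓝 0] fun s => s := by
    simpa using (isLittleO_pow_pow (𝕜 := ℝ) (m := 1) (n := 2) (by norm_num)).isBigO
  exact ((hk.isBigO_sub_linear.trans hsq).add ((isBigO_refl _ _).const_mul_left b)).congr_left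
    fun s => by ring

theorem tendsto (hk : HasQuadraticExpansion k a b c) : Tendsto k (𝓝 0) (𝓝 a) := by
  have := hk.isBigO_sub_const.trans_tendsto (tendsto_id (x := 𝓝 (0 : ℝ)))
  simpa using this.add_const a

end HasQuadraticExpansion

section AutonomousODE

variable {D : ℝ → ℝ}

theorem abs_sub_taylor_two_le_of_autonomous (hD : ContDiff ℝ 2 D) {u : ℝ → ℝ} {s M : ℝ}
    {S : Set ℝ} (hu : ∀ t ∈ uIcc 0 s, HasDerivAt u (D (u t)) t)
    (huS : ∀ t ∈ uIcc 0 s, u t ∈ S)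
    (hM : ∀ y ∈ S, |deriv (deriv D) y * D y ^ 2 + deriv D y ^ 2 * D y| ≤ M) :
    |u s - u 0 - s * D (u 0) - s ^ 2 / 2 * (deriv D (u 0) * D (u 0))| ≤ M * |s| ^ 3 := by
  have hD' : ∀ y, HasDerivAt D (deriv D y) y := fun y =>
    (hD.differentiable two_ne_zero y).hasDerivAt
  have hD'' : ∀ y, HasDerivAt (deriv D) (deriv (deriv D) y) y := fun y =>
    ((hD.deriv' (n := 1)).differentiable one_ne_zero y).hasDerivAt
  refine abs_sub_taylor_two_le hu (fun t ht => (hD' (u t)).comp t (hu t ht))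
    (fun t ht => (((hD'' (u t)).comp t (hu t ht)).mul
      ((hD' (u t)).comp t (hu t ht))).congr_deriv (by simp only [Function.comp_apply]; ring))
    (fun t ht => hM (u t) (huS t ht))

theorem isBigO_flow_sub_taylor_two (hD : ContDiff ℝ 2 D) {X : Type*} [TopologicalSpace X]
    {G : ℝ → X → ℝ} {x₀ : X} (hG : ∀ x s, HasDerivAt (fun t => G t x) (D (G s x)) s)
    (hGc : ContinuousAt (fun p : ℝ × X => G p.1 p.2) (0, x₀)) :
    (fun p : ℝ × X => G p.1 p.2 - G 0 p.2 - p.1 * D (G 0 p.2)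
        - p.1 ^ 2 / 2 * (deriv D (G 0 p.2) * D (G 0 p.2))) =O[𝓝 (0, x₀)] fun p => p.1 ^ 3 := by
  set S := Metric.closedBall (G 0 x₀) 1
  have hjerk : Continuous fun y => deriv (deriv D) y * D y ^ 2 + deriv D y ^ 2 * D y := by
    have := hD.continuous
    have := hD.continuous_deriv one_le_two
    have := (hD.deriv' (n := 1)).continuous_deriv le_rfl
    fun_prop
  obtain ⟨M, hM⟩ := (isCompact_closedBall _ _).exists_bound_of_continuousOn hjerk.continuousOn
  obtain ⟨U, hU, V, hV, hUV⟩ := mem_nhds_prod_iff.1 (hGc (Metric.closedBall_mem_nhds _ one_pos))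
  obtain ⟨δ, hδ, hδU⟩ := Metric.mem_nhds_iff.1 hU
  refine IsBigO.of_bound M ?_
  filter_upwards [prod_mem_nhds (Metric.ball_mem_nhds 0 hδ) hV] with p hp
  have hGS : ∀ t ∈ uIcc 0 p.1, G t p.2 ∈ S := fun t ht => by
    have ht : |t| < δ := by
      simpa using (abs_sub_left_of_mem_uIcc ht).trans_lt (by simpa using hp.1)
    exact hUV (show (t, p.2) ∈ U ×ˢ V from ⟨hδU (by simpa using ht), hp.2⟩)
  simpa [Real.norm_eq_abs, abs_pow] using abs_sub_taylor_two_le_of_autonomous hD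
    (fun t _ => hG p.2 t) hGS (fun y hy => by simpa using hM y hy)

theorem hasQuadraticExpansion_of_autonomous (hD : ContDiff ℝ 2 D) {u : ℝ → ℝ}
    (hu : ∀ t, HasDerivAt u (D (u t)) t) :
    HasQuadraticExpansion u (u 0) (D (u 0)) (deriv D (u 0) * D (u 0)) := by
  have hflow := isBigO_flow_sub_taylor_two hD (G := fun t (_ : Unit) => u t) (x₀ := ())
    (fun _ t => hu t) (ContinuousAt.comp (f := Prod.fst) (hu 0).continuousAt continuousAt_fst)
  simpa [HasQuadraticExpansion, Function.comp_def] using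
    hflow.comp_tendsto (tendsto_id.prodMk_nhds (tendsto_const_nhds (x := ())))

theorem HasQuadraticExpansion.flow_comp (hD : ContDiff ℝ 2 D) {G : ℝ → ℝ → ℝ}
    (hG : ∀ φ s, HasDerivAt (fun t => G t φ) (D (G s φ)) s) (hG₀ : ∀ φ, G 0 φ = φ)
    {k : ℝ → ℝ} {a b c : ℝ} (hGc : ContinuousAt (fun p : ℝ × ℝ => G p.1 p.2) (0, a))
    (hk : HasQuadraticExpansion k a b c) :
    HasQuadraticExpansion (fun s => G s (k s)) a (b + D a)
      (c + 2 * deriv D a * b + deriv D a * D a) := by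
  have hcurve : Tendsto (fun s => (s, k s)) (𝓝 0) (𝓝 (0, a)) :=
    tendsto_id.prodMk_nhds hk.tendsto
  have hflow : (fun s => G s (k s) - k s - s * D (k s) - s ^ 2 / 2 * (deriv D (k s) * D (k s)))
      =O[𝓝 0] fun s => s ^ 3 := by
    simpa [hG₀, Function.comp_def] using
      (isBigO_flow_sub_taylor_two hD hG hGc).comp_tendsto hcurve
  have hD' : ∀ y, HasDerivAt D (deriv D y) y := fun y =>
    (hD.differentiable two_ne_zero y).hasDerivAt
  have hDk : (fun s => D (k s) - D a - deriv D a * (k s - a)) =O[𝓝 0] fun s => s ^ 2 :=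
    ((isBigO_sub_sub_mul_sq_of_hasDerivAt (Eventually.of_forall hD')
      ((hD.deriv' (n := 1)).differentiable one_ne_zero a)).comp_tendsto hk.tendsto).trans
      (hk.isBigO_sub_const.pow 2)
  have hD'Dk : (fun s => deriv D (k s) * D (k s) - deriv D a * D a) =O[𝓝 0] fun s => s :=
    (((((hD.deriv' (n := 1)).differentiable one_ne_zero a).mul
      (hD.differentiable two_ne_zero a)).hasDerivAt.isBigO_sub).comp_tendsto hk.tendsto).trans
      hk.isBigO_sub_const
  have hcube {f g : ℝ → ℝ} (hf : f =O[𝓝 0] fun s => s) (hg : g =O[𝓝 0] fun s => s ^ 2) :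
      (fun s => f s * g s) =O[𝓝 0] fun s => s ^ 3 :=
    (hf.mul hg).congr_right fun s => by ring
  have hs : (fun s : ℝ => s) =O[𝓝 0] fun s => s := isBigO_refl _ _
  have hs2 : (fun s : ℝ => s ^ 2 / 2) =O[𝓝 0] fun s => s ^ 2 :=
    (isBigO_refl _ _).const_mul_left (1 / 2) |>.congr_left fun s => by ring
  -- flow remainder + remainder of `k` + `s` × Taylor remainder of `D` at `a`
  -- + `s D'(a)` × first-order remainder of `k` + `s² / 2` × increment of `D' D`
  exact ((((hflow.add hk).add (hcube hs hDk)).add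
    ((hcube hs hk.isBigO_sub_linear).const_mul_left (deriv D a))).add
    (hcube hD'Dk hs2)).congr_left fun s => by ring

end AutonomousODE

theorem original_scheme_local_truncation_error_general
    (A B C q qA : ℝ → ℝ) (qB qC : ℝ → ℝ → ℝ) (tn : ℝ)
    (hA : ContDiff ℝ 2 A) (hB : ContDiff ℝ 2 B) (hC : ContDiff ℝ 2 C)
    (hq : ∀ t, HasDerivAt q (A (q t) + B (q t) + C (q t)) t)
    (hqA : ∀ s, HasDerivAt qA (A (qA s)) s)
    (hqA0 : qA 0 = q tn)
    (hqB : ∀ φ s, HasDerivAt (fun u => qB u φ) (B (qB s φ)) s)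
    (hqB0 : ∀ φ, qB 0 φ = φ)
    (hqC : ∀ φ s, HasDerivAt (fun u => qC u φ) (C (qC s φ)) s)
    (hqC0 : ∀ φ, qC 0 φ = φ)
    (hqBsmooth : ContDiffAt ℝ 2 (fun p : ℝ × ℝ => qB p.1 p.2) (0, q tn))
    (hqCsmooth : ContDiffAt ℝ 2 (fun p : ℝ × ℝ => qC p.1 p.2) (0, q tn)) :
    (fun Δt : ℝ =>
        (qC Δt (qB Δt (qA Δt)) - q (tn + Δt))
          - Δt ^ 2 / 2 *
              (deriv A (q tn) * (-B (q tn) - C (q tn))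
                + deriv B (q tn) * (A (q tn) - C (q tn))
                + deriv C (q tn) * (A (q tn) + B (q tn))))
      =O[nhds (0:ℝ)] (fun Δt : ℝ => Δt ^ 3) := by
  have hscheme : HasQuadraticExpansion (fun s => qC s (qB s (qA s))) (q tn)
      (A (q tn) + B (q tn) + C (q tn))
      (deriv A (q tn) * A (q tn) + 2 * deriv B (q tn) * A (q tn) + deriv B (q tn) * B (q tn)
        + 2 * deriv C (q tn) * (A (q tn) + B (q tn)) + deriv C (q tn) * C (q tn)) :=
    ((hqA0 ▸ hasQuadraticExpansion_of_autonomous hA hqA).flow_comp hB hqB hqB0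
      hqBsmooth.continuousAt).flow_comp hC hqC hqC0 hqCsmooth.continuousAt
  have hexact : HasQuadraticExpansion (fun s => q (tn + s)) (q tn)
      (A (q tn) + B (q tn) + C (q tn))
      ((deriv A (q tn) + deriv B (q tn) + deriv C (q tn)) * (A (q tn) + B (q tn) + C (q tn))) := by
    have hABC : ContDiff ℝ 2 fun y => A y + B y + C y := (hA.add hB).add hC
    have := hasQuadraticExpansion_of_autonomous hABC fun t => (hq (tn + t)).comp_const_add tn t
    have hderiv : deriv (fun y => A y + B y + C y) (q tn)
        = deriv A (q tn) + deriv B (q tn) + deriv C (q tn) :=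
      (((hA.differentiable two_ne_zero _).hasDerivAt.add
        (hB.differentiable two_ne_zero _).hasDerivAt).add
        (hC.differentiable two_ne_zero _).hasDerivAt).deriv
    rwa [add_zero, hderiv] at this
  exact (hscheme.sub hexact).congr_left fun s => by ring

theorem original_scheme_local_truncation_error
    (A B C q qA : ℝ → ℝ) (qB qC : ℝ → ℝ → ℝ) (tn : ℝ)
    (hA : ContDiff ℝ 2 A) (hB : ContDiff ℝ 2 B) (hC : ContDiff ℝ 2 C)
    (hq : ∀ t, HasDerivAt q (A (q t) + B (q t) + C (q t)) t)
    (hqA : ∀ s, HasDerivAt qA (A (qA s)) s)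
    (hqA0 : qA 0 = q tn)
    (hqB : ∀ φ s, HasDerivAt (fun u => qB u φ) (B (qB s φ)) s)
    (hqB0 : ∀ φ, qB 0 φ = φ)
    (hqC : ∀ φ s, HasDerivAt (fun u => qC u φ) (C (qC s φ)) s)
    (hqC0 : ∀ φ, qC 0 φ = φ)
    (hqAsmooth : ContDiffAt ℝ 2 qA 0)
    (hqBsmooth : ContDiffAt ℝ 2 (fun p : ℝ × ℝ => qB p.1 p.2) (0, q tn))
    (hqCsmooth : ContDiffAt ℝ 2 (fun p : ℝ × ℝ => qC p.1 p.2) (0, q tn)) :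
    (fun Δt : ℝ =>
        (qC Δt (qB Δt (qA Δt)) - q (tn + Δt))
          - Δt ^ 2 / 2 *
              (deriv A (q tn) * (-B (q tn) - C (q tn))
                + deriv B (q tn) * (A (q tn) - C (q tn))
                + deriv C (q tn) * (A (q tn) + B (q tn))))
      =O[nhds (0:ℝ)] (fun Δt : ℝ => Δt ^ 3) :=
  original_scheme_local_truncation_error_general A B C q qA qB qC tn hA hB hC hq hqA hqA0 hqB hqB0
    hqC hqC0 hqBsmooth hqCsmooth
end

section
/- Let A, B, C : ℝ → ℝ be twice continuously differentiable, let tₙ ∈ ℝ, let q : ℝ → ℝ satisfy q′(t) = A(q(t)) + B(q(t)) + C(q(t)) for all t, and let q_B : ℝ → ℝ satisfy q_B′(s) = B(q_B(s)) with q_B(0) = q(tₙ), twice continuously differentiable near 0. Then the revised scheme's local truncation error attributable to process B, lte_B^{Rev}(Δt) = ∫₀^{Δt} B(q_B(η)) dη − ∫₀^{Δt} B(q(tₙ+η)) dη, satisfies lte_B^{Rev}(Δt) = (Δt²/2)·B′(q(tₙ))·(−A(q(tₙ)) − C(q(tₙ))) + O(Δt³) as Δt → 0. -/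
open Filter Asymptotics Topology

/-!
Both integrands agree at `η = 0`, so the defect `g η = B (q_B η) - B (q (tₙ + η))` vanishes there,
and by the chain rule `g' 0 = B'(q tₙ) (B - (A + B + C))(q tₙ) = B'(q tₙ) (-A - C)(q tₙ)`.
Since `B` is `C²` and `A`, `C` are `C¹`, `g'` is itself differentiable, so
`g η = η g'(0) + O(η²)`; integrating once more gives the `Δt² / 2` term with an `O(Δt³)` remainder.
Both gains of one order come from the mean value inequality.
-/

section BigO

variable {E : Type*} [NormedAddCommGroup E] [NormedSpace ℝ E]

theorem isBigO_pow_succ_of_hasDerivAt {f f' : ℝ → E} {k : ℕ} (hf0 : f 0 = 0)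
    (hf : ∀ᶠ x in 𝓝 0, HasDerivAt f (f' x) x) (hf' : f' =O[𝓝 0] (· ^ k)) :
    f =O[𝓝 0] (· ^ (k + 1)) := by
  obtain ⟨K, hK0, hK⟩ := hf'.exists_nonneg
  obtain ⟨δ, hδ, hball⟩ := Metric.eventually_nhds_iff_ball.mp (hf.and hK.bound)
  refine IsBigO.of_bound K (Metric.eventually_nhds_iff_ball.mpr ⟨δ, hδ, fun x hx => ?_⟩)
  have hsub : Metric.closedBall (0 : ℝ) ‖x‖ ⊆ Metric.ball 0 δ := fun t ht =>
    mem_ball_zero_iff.mpr ((mem_closedBall_zero_iff.mp ht).trans_lt (mem_ball_zero_iff.mp hx))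
  have hmvt := (convex_closedBall (0 : ℝ) ‖x‖).norm_image_sub_le_of_norm_hasDerivWithin_le
    (f := f) (C := K * ‖x‖ ^ k)
    (fun t ht => (hball t (hsub ht)).1.hasDerivWithinAt)
    (fun t ht => (hball t (hsub ht)).2.trans <| by
      rw [norm_pow]
      gcongr
      exact mem_closedBall_zero_iff.mp ht)
    (Metric.mem_closedBall_self (norm_nonneg x)) (mem_closedBall_zero_iff.mpr le_rfl)
  rwa [hf0, sub_zero, sub_zero, mul_assoc, ← pow_succ, ← norm_pow] at hmvt

theorem isBigO_sub_smul_of_hasDerivAt {f f' : ℝ → E} (hf0 : f 0 = 0)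
    (hf : ∀ x, HasDerivAt f (f' x) x) (hf' : DifferentiableAt ℝ f' 0) :
    (fun x => f x - x • f' 0) =O[𝓝 0] (· ^ 2) := by
  have hderiv : ∀ x, HasDerivAt (fun x => f x - x • f' 0) (f' x - f' 0) x := fun x => by
    simpa using (hf x).fun_sub ((hasDerivAt_id x).smul_const (f' 0))
  refine isBigO_pow_succ_of_hasDerivAt (k := 1) (by simp [hf0])
    (Eventually.of_forall hderiv) ?_
  simpa using hf'.isBigO_sub

theorem isBigO_integral_sub_of_isBigO_sub_smul [CompleteSpace E] {g : ℝ → E} {c : E}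
    (hg : Continuous g) (hgc : (fun x => g x - x • c) =O[𝓝 0] (· ^ 2)) :
    (fun x => (∫ t in (0 : ℝ)..x, g t) - (x ^ 2 / 2) • c) =O[𝓝 0] (· ^ 3) := by
  have hderiv : ∀ x, HasDerivAt (fun x => (∫ t in (0 : ℝ)..x, g t) - (x ^ 2 / 2) • c)
      (g x - x • c) x := fun x => by
    have hsq : HasDerivAt (fun x : ℝ => x ^ 2 / 2) x x := by
      simpa using (hasDerivAt_pow 2 x).div_const 2
    exact (hg.integral_hasStrictDerivAt 0 x).hasDerivAt.sub (hsq.smul_const c)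
  exact isBigO_pow_succ_of_hasDerivAt (by simp) (Eventually.of_forall hderiv) hgc

end BigO

theorem differentiable_deriv_comp_mul_of_hasDerivAt {F Φ y : ℝ → ℝ}
    (hy : ∀ t, HasDerivAt y (F (y t)) t) (hΦ : ContDiff ℝ 2 Φ) (hF : Differentiable ℝ F) :
    Differentiable ℝ fun t => deriv Φ (y t) * F (y t) :=
  have hyd : Differentiable ℝ y := fun t => (hy t).differentiableAt
  (hΦ.differentiable_deriv_two.comp hyd).mul (hF.comp hyd)

theorem lte_B_revised_three_process_general
    (A B C q qB : ℝ → ℝ) (tn : ℝ)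
    (hA : ContDiff ℝ 2 A) (hB : ContDiff ℝ 2 B) (hC : ContDiff ℝ 2 C)
    (hq : ∀ t, HasDerivAt q (A (q t) + B (q t) + C (q t)) t)
    (hqB : ∀ s, HasDerivAt qB (B (qB s)) s)
    (hqB0 : qB 0 = q tn) :
    (fun Δt : ℝ =>
        ((∫ η in (0:ℝ)..Δt, B (qB η)) - ∫ η in (0:ℝ)..Δt, B (q (tn + η)))
          - Δt ^ 2 / 2 * (deriv B (q tn) * (-A (q tn) - C (q tn))))
      =O[nhds (0:ℝ)] (fun Δt : ℝ => Δt ^ 3) := by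
  have hqs : ∀ η, HasDerivAt (fun η => q (tn + η)) ((A + B + C) (q (tn + η))) η :=
    fun η => (hq (tn + η)).comp_const_add tn η
  have hBd : Differentiable ℝ B := hB.differentiable two_ne_zero
  set G : ℝ → ℝ := fun η => deriv B (qB η) * B (qB η)
    - deriv B (q (tn + η)) * (A + B + C) (q (tn + η)) with hG
  have hg : ∀ η, HasDerivAt (fun η => B (qB η) - B (q (tn + η))) (G η) η := fun η =>
    ((hBd _).hasDerivAt.comp η (hqB η)).sub ((hBd _).hasDerivAt.comp η (hqs η))
  have hGd : DifferentiableAt ℝ G 0 :=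
    ((differentiable_deriv_comp_mul_of_hasDerivAt hqB hB hBd).sub
      (differentiable_deriv_comp_mul_of_hasDerivAt hqs hB
        (((hA.add hB).add hC).differentiable two_ne_zero))) 0
  have hG0 : G 0 = deriv B (q tn) * (-A (q tn) - C (q tn)) := by
    simp only [hG, hqB0, add_zero, Pi.add_apply]
    ring
  have key := isBigO_integral_sub_of_isBigO_sub_smul
    (continuous_iff_continuousAt.mpr fun η => (hg η).continuousAt)
    (isBigO_sub_smul_of_hasDerivAt (by simp [hqB0]) hg hGd)
  rw [hG0] at key
  refine key.congr_left fun Δt => ?_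
  have hcont : ∀ y : ℝ → ℝ, Differentiable ℝ y → Continuous fun η => B (y η) :=
    fun y hy => hB.continuous.comp hy.continuous
  rw [intervalIntegral.integral_sub
    ((hcont qB fun s => (hqB s).differentiableAt).intervalIntegrable 0 Δt)
    ((hcont _ fun η => (hqs η).differentiableAt).intervalIntegrable 0 Δt), smul_eq_mul]

theorem lte_B_revised_three_process
    (A B C q qB : ℝ → ℝ) (tn : ℝ)
    (hA : ContDiff ℝ 2 A) (hB : ContDiff ℝ 2 B) (hC : ContDiff ℝ 2 C)
    (hq : ∀ t, HasDerivAt q (A (q t) + B (q t) + C (q t)) t)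
    (hqB : ∀ s, HasDerivAt qB (B (qB s)) s)
    (hqB0 : qB 0 = q tn)
    (hqBsmooth : ContDiffAt ℝ 2 qB 0) :
    (fun Δt : ℝ =>
        ((∫ η in (0:ℝ)..Δt, B (qB η)) - ∫ η in (0:ℝ)..Δt, B (q (tn + η)))
          - Δt ^ 2 / 2 * (deriv B (q tn) * (-A (q tn) - C (q tn))))
      =O[nhds (0:ℝ)] (fun Δt : ℝ => Δt ^ 3) :=
  lte_B_revised_three_process_general A B C q qB tn hA hB hC hq hqB hqB0
end
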